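/- For any affine subspace A = {v₀ + w : w ∈ W} of a finite-dimensional inner product space, and any convex function Φ of the form Φ(u) = ∑_k φ*(u_k) where φ* is the Huber function, the minimum-norm element of A minimizes ∑_k (u_k)²/2 over A; moreover if the minimum-norm element u* satisfies |u*_k| ≤ 1 for all coordinates k, then u* also minimizes Φ over A. -/
import Mathlib

lemma huber_lower (u v : ℝ) (hu : |u| ≤ 1) :
    u ^ 2 / 2 + u * (v - u) ≤ if |v| ≤ 1 then v ^ 2 / 2 else |v| - 1 / 2 := by
  split_ifs with h
  · nlinarith [sq_nonneg (v - u)]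
  · have hv : 1 < |v| := lt_of_not_ge h
    have h1 : u * v ≤ |u| * |v| := by
      calc u * v ≤ |u * v| := le_abs_self _
        _ = |u| * |v| := abs_mul u v
    have h2 : 0 ≤ (1 - |u|) * (|v| - 1) :=
      mul_nonneg (by linarith) (by linarith)
    have h3 : u ^ 2 = |u| ^ 2 := (sq_abs u).symm
    nlinarith [sq_nonneg (1 - |u|)]

theorem min_norm_minimizes_huber {n : ℕ}
    (W : Submodule ℝ (Fin n → ℝ)) (v₀ : Fin n → ℝ)
    (A : Set (Fin n → ℝ)) (hA : A = {v | ∃ w ∈ W, v = v₀ + w})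
    (ustar : Fin n → ℝ) (hmem : ustar ∈ A)
    (hmin : ∀ v ∈ A, ∑ k, (ustar k) ^ 2 ≤ ∑ k, (v k) ^ 2) :
    (∀ v ∈ A, ∑ k, (ustar k) ^ 2 / 2 ≤ ∑ k, (v k) ^ 2 / 2)
    ∧ ((∀ k, |ustar k| ≤ 1) →
        ∀ v ∈ A,
          (∑ k, (if |ustar k| ≤ 1 then (ustar k) ^ 2 / 2 else |ustar k| - 1 / 2)) ≤
            ∑ k, (if |v k| ≤ 1 then (v k) ^ 2 / 2 else |v k| - 1 / 2)) := by
  constructor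
  · intro v hv
    have := hmin v hv
    have h1 : ∑ k, (ustar k) ^ 2 / 2 = (∑ k, (ustar k) ^ 2) / 2 := by
      rw [Finset.sum_div]
    have h2 : ∑ k, (v k) ^ 2 / 2 = (∑ k, (v k) ^ 2) / 2 := by
      rw [Finset.sum_div]
    rw [h1, h2]
    linarith
  · intro hub v hv
    obtain ⟨w₀, hw₀, hu⟩ := hA ▸ hmem
    -- orthogonality
    have horth : ∀ w ∈ W, ∑ k, ustar k * w k = 0 := by
      intro w hw
      set S := ∑ k, (w k) ^ 2 with hS
      have hS0 : 0 ≤ S := Finset.sum_nonneg fun k _ => sq_nonneg _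
      set c := ∑ k, ustar k * w k with hc
      set t : ℝ := -c / (S + 1) with ht
      have hmemt : (fun k => ustar k + t * w k) ∈ A := by
        rw [hA]
        refine ⟨w₀ + t • w, W.add_mem hw₀ (W.smul_mem t hw), ?_⟩
        funext k
        have := congrFun hu k
        simp only [Pi.add_apply, Pi.smul_apply, smul_eq_mul] at this ⊢
        rw [this]; ring
      have hle := hmin _ hmemt
      have hexp : ∑ k, ((fun k => ustar k + t * w k) k) ^ 2
          = (∑ k, (ustar k) ^ 2) + 2 * t * c + t ^ 2 * S := by
        have : ∀ k, (ustar k + t * w k) ^ 2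
            = (ustar k) ^ 2 + (2 * t) * (ustar k * w k) + t ^ 2 * (w k) ^ 2 :=
          fun k => by ring
        simp only [this, Finset.sum_add_distrib, ← Finset.mul_sum, hc, hS]
      rw [hexp] at hle
      have key : 0 ≤ 2 * t * c + t ^ 2 * S := by linarith
      rw [ht] at key
      have hpos : (0:ℝ) < S + 1 := by linarith
      have hne : S + 1 ≠ 0 := ne_of_gt hpos
      have hc2 : c ^ 2 = 0 := by
        have hq : (2 * (-c / (S + 1)) * c + (-c / (S + 1)) ^ 2 * S) * (S + 1) ^ 2
            = -2 * c ^ 2 * (S + 1) + c ^ 2 * S := by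
          field_simp
        have keyp : 0 ≤ -2 * c ^ 2 * (S + 1) + c ^ 2 * S :=
          hq ▸ mul_nonneg key (sq_nonneg _)
        nlinarith [sq_nonneg c, hS0, mul_nonneg (sq_nonneg c) hS0]
      have : c = 0 := by
        have := sq_eq_zero_iff.mp hc2
        exact this
      exact this
    -- v - ustar ∈ W
    obtain ⟨w, hw, hv'⟩ := hA ▸ hv
    have hdiff : (v - ustar) ∈ W := by
      have : v - ustar = w - w₀ := by
        rw [hv', hu]; abel
      rw [this]; exact W.sub_mem hw hw₀
    have hz : ∑ k, ustar k * (v k - ustar k) = 0 := horth _ hdiff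
    have hleft : (∑ k, (if |ustar k| ≤ 1 then (ustar k) ^ 2 / 2 else |ustar k| - 1 / 2))
        = ∑ k, ((ustar k) ^ 2 / 2 + ustar k * (v k - ustar k)) := by
      rw [Finset.sum_add_distrib, hz, add_zero]
      exact Finset.sum_congr rfl fun k _ => if_pos (hub k)
    rw [hleft]
    exact Finset.sum_le_sum fun k _ => huber_lower (ustar k) (v k) (hub k)
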